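/- arXiv:2110.15335 — 4 statements merged into one kernel-verified Lean document; each statement's English description precedes it below -/
import Mathlib

section
/- Let (Ω, P) be a probability space, Θ and Y standard Borel spaces, and let θ : Ω → Θ and Y : Ω → Y be measurable. Let μ be the law of θ, ν the law of Y, and π : Y → P(Θ) a regular conditional distribution of θ given Y. Then for every probability measure ξ on Θ, as an identity in [0, ∞]: ∫_Y D_KL( π(y) ‖ ξ ) dν(y) = ∫_Y D_KL( π(y) ‖ μ ) dν(y) + D_KL( μ ‖ ξ ). (The one-experiment decomposition step used recursively in the proof of the equivalence of terminal and incremental information-gain formulations: the expected KL divergence from a fixed reference to the posterior equals the expected information gain plus the KL divergence from the reference to the prior.) -/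
/-!
Write `ν` for the law of `Y` and `μ = π ∘ₘ ν` for the law of `θ`. For a fixed reference measure,
the expected divergence `∫ KL(π y ‖ ξ) dν` is the divergence `KL(ν ⊗ₘ π ‖ ν × ξ)` of the joint
law from a product. After swapping coordinates the joint law is `μ ⊗ₘ π†ν` (posterior
disintegration) and `ν × ξ` is `ξ ⊗ₘ const ν`, so the chain rule for composition products splits
`KL(ν ⊗ₘ π ‖ ν × ξ)` into `KL(μ ‖ ξ)` plus `KL(ν ⊗ₘ π ‖ ν × μ) = ∫ KL(π y ‖ μ) dν`.
-/

open MeasureTheory ProbabilityTheory ENNReal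
open scoped Classical

/-- Kullback–Leibler divergence `D_KL(P‖Q) = ∫ log (dP/dQ) dP ∈ [0,∞]`,
equal to `∞` when `P` is not absolutely continuous w.r.t. `Q` (or when the
log-likelihood ratio is not integrable). -/
noncomputable def klDiv {α : Type*} [MeasurableSpace α] (P Q : Measure α) : ℝ≥0∞ :=
  if P ≪ Q ∧ Integrable (llr P Q) P then ENNReal.ofReal (∫ a, llr P Q a ∂P) else ⊤

/-- Mathlib's `klDiv` carries the mass correction `Q univ - P univ`, which vanishes here. -/
lemma klDiv_eq_informationTheory_klDiv {α : Type*} [MeasurableSpace α] {P Q : Measure α}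
    (h : P Set.univ = Q Set.univ) : klDiv P Q = InformationTheory.klDiv P Q := by
  rw [klDiv, InformationTheory.klDiv_def, measureReal_def, measureReal_def, h, add_sub_cancel_right]

-- Inside this namespace `klDiv` is Mathlib's `InformationTheory.klDiv`.
namespace InformationTheory

variable {α β : Type*} [MeasurableSpace α] [MeasurableSpace β]

lemma klDiv_map_measurableEquiv (μ ν : Measure α) [IsFiniteMeasure μ] [IsFiniteMeasure ν]
    (e : α ≃ᵐ β) : klDiv (μ.map e) (ν.map e) = klDiv μ ν := by
  refine le_antisymm (klDiv_map_le μ ν e.measurable) ?_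
  simpa only [MeasurableEquiv.map_symm_map] using klDiv_map_le (μ.map e) (ν.map e) e.symm.measurable

lemma klDiv_map_swap (μ ν : Measure (α × β)) [IsFiniteMeasure μ] [IsFiniteMeasure ν] :
    klDiv (μ.map Prod.swap) (ν.map Prod.swap) = klDiv μ ν :=
  klDiv_map_measurableEquiv μ ν MeasurableEquiv.prodComm

lemma lintegral_klDiv_eq_klDiv_compProd [MeasurableSpace.CountableOrCountablyGenerated α β]
    (μ : Measure α) [IsFiniteMeasure μ] (κ η : Kernel α β) [IsFiniteKernel κ] [IsFiniteKernel η] :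
    ∫⁻ a, klDiv (κ a) (η a) ∂μ = klDiv (μ ⊗ₘ κ) (μ ⊗ₘ η) := by
  by_cases h_ac : ∀ᵐ a ∂μ, κ a ≪ η a
  · have h_eq : μ ⊗ₘ κ = (μ ⊗ₘ η).withDensity (fun p ↦ κ.rnDeriv η p.1 p.2) := by
      rw [← Measure.compProd_withDensity (Kernel.measurable_rnDeriv κ η)]
      refine Measure.compProd_congr ?_
      filter_upwards [h_ac] with a ha using (Kernel.withDensity_rnDeriv_eq ha).symm
    have h_rnDeriv : (μ ⊗ₘ κ).rnDeriv (μ ⊗ₘ η) =ᵐ[μ ⊗ₘ η] fun p ↦ κ.rnDeriv η p.1 p.2 := by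
      rw [h_eq]
      exact Measure.rnDeriv_withDensity _ (Kernel.measurable_rnDeriv κ η)
    rw [klDiv_eq_lintegral_klFun_of_ac (Measure.absolutelyContinuous_compProd_right_iff.mpr h_ac),
      lintegral_congr_ae (h_rnDeriv.mono fun p hp ↦ by rw [hp]),
      Measure.lintegral_compProd (by fun_prop)]
    refine lintegral_congr_ae ?_
    filter_upwards [h_ac] with a ha
    rw [klDiv_eq_lintegral_klFun_of_ac ha]
    refine lintegral_congr_ae ?_
    filter_upwards [Kernel.rnDeriv_eq_rnDeriv_measure (κ := κ) (η := η) (a := a)] with b hb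
    rw [hb]
  · have h_top : ∀ a ∈ {a | ¬ κ a ≪ η a}, klDiv (κ a) (η a) = ∞ := fun a ha ↦ klDiv_of_not_ac ha
    rw [klDiv_of_not_ac (mt Measure.absolutelyContinuous_compProd_right_iff.mp h_ac), ← top_le_iff]
    calc ∞ = ∫⁻ a in {a | ¬ κ a ≪ η a}, ∞ ∂μ := by
          rw [setLIntegral_const, top_mul (mt ae_iff.mpr h_ac)]
      _ = ∫⁻ a in {a | ¬ κ a ≪ η a}, klDiv (κ a) (η a) ∂μ :=
          (setLIntegral_congr_fun (Kernel.measurableSet_absolutelyContinuous κ η).compl h_top).symm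
      _ ≤ ∫⁻ a, klDiv (κ a) (η a) ∂μ := setLIntegral_le_lintegral _ _

lemma lintegral_klDiv_eq_klDiv_prod [MeasurableSpace.CountableOrCountablyGenerated α β]
    (μ : Measure α) [IsFiniteMeasure μ] (κ : Kernel α β) [IsFiniteKernel κ]
    (ξ : Measure β) [IsFiniteMeasure ξ] :
    ∫⁻ a, klDiv (κ a) ξ ∂μ = klDiv (μ ⊗ₘ κ) (μ.prod ξ) := by
  simpa only [Kernel.const_apply, Measure.compProd_const] using
    lintegral_klDiv_eq_klDiv_compProd μ κ (Kernel.const α ξ)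

lemma klDiv_compProd_prod_eq_add [StandardBorelSpace α] [Nonempty α]
    (μ : Measure α) [IsProbabilityMeasure μ] (κ : Kernel α β) [IsFiniteKernel κ]
    (ξ : Measure β) [IsFiniteMeasure ξ] :
    klDiv (μ ⊗ₘ κ) (μ.prod ξ) = klDiv (κ ∘ₘ μ) ξ + klDiv (μ ⊗ₘ κ) (μ.prod (κ ∘ₘ μ)) := by
  rw [← klDiv_map_swap, ← klDiv_map_swap (μ ⊗ₘ κ), ← compProd_posterior_eq_map_swap,
    Measure.prod_swap, Measure.prod_swap, ← Measure.compProd_const, ← Measure.compProd_const]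
  exact klDiv_compProd_eq_add _ _ _ _

theorem lintegral_klDiv_eq_lintegral_klDiv_comp_add [StandardBorelSpace α] [Nonempty α]
    [MeasurableSpace.CountableOrCountablyGenerated α β]
    (μ : Measure α) [IsProbabilityMeasure μ] (κ : Kernel α β) [IsFiniteKernel κ]
    (ξ : Measure β) [IsFiniteMeasure ξ] :
    ∫⁻ a, klDiv (κ a) ξ ∂μ = ∫⁻ a, klDiv (κ a) (κ ∘ₘ μ) ∂μ + klDiv (κ ∘ₘ μ) ξ := by
  rw [lintegral_klDiv_eq_klDiv_prod, lintegral_klDiv_eq_klDiv_prod, klDiv_compProd_prod_eq_add,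
    add_comm]

end InformationTheory

theorem expected_klDiv_to_reference_decomposition_general
    {Ω Θ 𝒴 : Type*} [MeasurableSpace Ω] [MeasurableSpace Θ] [MeasurableSpace 𝒴]
    [StandardBorelSpace Θ] [StandardBorelSpace 𝒴] [Nonempty 𝒴]
    (P : Measure Ω) [IsProbabilityMeasure P]
    (θ : Ω → Θ)
    (Y : Ω → 𝒴) (hY : Measurable Y)
    -- `π` is a regular conditional distribution of `θ` given `Y`:
    -- a Markov kernel disintegrating the joint law of `(Y, θ)`.
    (π : Kernel 𝒴 Θ) [IsMarkovKernel π]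
    (hπ : P.map (fun ω => (Y ω, θ ω)) = (P.map Y) ⊗ₘ π)
    (ξ : Measure Θ) [IsProbabilityMeasure ξ] :
    ∫⁻ y, klDiv (π y) ξ ∂(P.map Y)
      = ∫⁻ y, klDiv (π y) (P.map θ) ∂(P.map Y) + klDiv (P.map θ) ξ := by
  have : IsProbabilityMeasure (P.map Y) := Measure.isProbabilityMeasure_map hY.aemeasurable
  have h_prior : P.map θ = π ∘ₘ P.map Y := by
    rw [← Measure.snd_compProd, ← hπ, Measure.snd_map_prodMk hY]
  simp only [h_prior, klDiv_eq_informationTheory_klDiv, measure_univ]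
  exact InformationTheory.lintegral_klDiv_eq_lintegral_klDiv_comp_add _ _ _

/-- One-experiment decomposition: the expected KL divergence from a fixed
reference `ξ` to the posterior equals the expected information gain plus the
KL divergence from the reference to the prior. -/
theorem expected_klDiv_to_reference_decomposition
    {Ω Θ 𝒴 : Type*} [MeasurableSpace Ω] [MeasurableSpace Θ] [MeasurableSpace 𝒴]
    [StandardBorelSpace Θ] [Nonempty Θ] [StandardBorelSpace 𝒴] [Nonempty 𝒴]
    (P : Measure Ω) [IsProbabilityMeasure P]
    (θ : Ω → Θ) (hθ : Measurable θ)
    (Y : Ω → 𝒴) (hY : Measurable Y)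
    -- `π` is a regular conditional distribution of `θ` given `Y`:
    -- a Markov kernel disintegrating the joint law of `(Y, θ)`.
    (π : Kernel 𝒴 Θ) [IsMarkovKernel π]
    (hπ : P.map (fun ω => (Y ω, θ ω)) = (P.map Y) ⊗ₘ π)
    (ξ : Measure Θ) [IsProbabilityMeasure ξ] :
    ∫⁻ y, klDiv (π y) ξ ∂(P.map Y)
      = ∫⁻ y, klDiv (π y) (P.map θ) ∂(P.map Y) + klDiv (P.map θ) ξ :=
  expected_klDiv_to_reference_decomposition_general P θ Y hY π hπ ξ
end

section
/- Let (Ω, P) be a probability space, Θ and Y standard Borel spaces, N a positive integer, and let θ : Ω → Θ and Y_0, …, Y_{N−1} : Ω → Y be measurable. For 0 ≤ k ≤ N let π_k : Y^k → P(Θ) be a regular conditional distribution of θ given (Y_0, …, Y_{k−1}), with π_0 the law of θ. Then for every measurable set A ⊆ Θ and every 0 ≤ k < N, P-almost surely E[ π_{k+1}(Y_0,…,Y_k)(A) ∣ σ(Y_0,…,Y_{k−1}) ] = π_k(Y_0,…,Y_{k−1})(A). (The Bayesian posterior probabilities form a martingale with respect to the observation filtration: integrating the next-stage posterior over the next observation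 recovers the current posterior, the key marginalization step in the proof of the terminal–incremental equivalence theorem.) -/
/-!
The posterior `π k (Y 0, …, Y (k-1))(A)` is a version of `P(θ ∈ A ∣ σ(Y 0, …, Y (k-1)))`, by
uniqueness of regular conditional distributions. The observation σ-algebras increase with `k`,
so the claim is the tower property of conditional expectation.
-/

open MeasureTheory ProbabilityTheory

section Posterior

variable {Ω β Θ : Type*} {mΩ : MeasurableSpace Ω} {mβ : MeasurableSpace β} [MeasurableSpace Θ]
  [StandardBorelSpace Θ] [Nonempty Θ] {P : Measure Ω} [IsFiniteMeasure P]
  {X : Ω → β} {θ : Ω → Θ} {κ : Kernel β Θ} [IsFiniteKernel κ] {A : Set Θ}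

theorem posterior_ae_eq_condExp (hX : Measurable X) (hθ : Measurable θ)
    (hκ : P.map (fun ω => (X ω, θ ω)) = P.map X ⊗ₘ κ) (hA : MeasurableSet A) :
    (fun ω => (κ (X ω) A).toReal) =ᵐ[P] P⟦θ ⁻¹' A | mβ.comap X⟧ := by
  have hκ_ae : ∀ᵐ ω ∂P, condDistrib θ X P (X ω) = κ (X ω) :=
    ae_of_ae_map hX.aemeasurable
      (condDistrib_ae_eq_of_measure_eq_compProd X hθ.aemeasurable hκ)
  filter_upwards [hκ_ae, condDistrib_ae_eq_condExp hX hθ hA] with ω hω hcond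
  rw [← hcond, hω, measureReal_def]

theorem condExp_posterior_of_comap_le {β' : Type*} {mβ' : MeasurableSpace β'} {X' : Ω → β'}
    {κ' : Kernel β' Θ} [IsFiniteKernel κ'] (hX : Measurable X) (hX' : Measurable X')
    (hθ : Measurable θ) (hκ : P.map (fun ω => (X ω, θ ω)) = P.map X ⊗ₘ κ)
    (hκ' : P.map (fun ω => (X' ω, θ ω)) = P.map X' ⊗ₘ κ') (hA : MeasurableSet A)
    (hle : mβ.comap X ≤ mβ'.comap X') :
    P[fun ω => (κ' (X' ω) A).toReal | mβ.comap X] =ᵐ[P] fun ω => (κ (X ω) A).toReal :=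
  calc P[fun ω => (κ' (X' ω) A).toReal | mβ.comap X]
      =ᵐ[P] P[P⟦θ ⁻¹' A | mβ'.comap X'⟧ | mβ.comap X] :=
        condExp_congr_ae (posterior_ae_eq_condExp hX' hθ hκ' hA)
    _ =ᵐ[P] P⟦θ ⁻¹' A | mβ.comap X⟧ := condExp_condExp_of_le hle hX'.comap_le
    _ =ᵐ[P] fun ω => (κ (X ω) A).toReal := (posterior_ae_eq_condExp hX hθ hκ hA).symm

end Posterior

theorem comap_history_le_succ {Ω 𝒴 : Type*} [MeasurableSpace 𝒴] (Y : ℕ → Ω → 𝒴) (k : ℕ) :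
    MeasurableSpace.comap (fun ω (i : Fin k) => Y i ω) inferInstance
      ≤ MeasurableSpace.comap (fun ω (i : Fin (k + 1)) => Y i ω) inferInstance := by
  have hrestrict : Measurable fun (v : Fin (k + 1) → 𝒴) (i : Fin k) => v i.castSucc :=
    measurable_pi_lambda _ fun i => measurable_pi_apply _
  change MeasurableSpace.comap
    ((fun (v : Fin (k + 1) → 𝒴) (i : Fin k) => v i.castSucc) ∘ fun ω i => Y i ω) _ ≤ _
  rw [← MeasurableSpace.comap_comp]
  exact MeasurableSpace.comap_mono hrestrict.comap_le

theorem posterior_probability_martingale_general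
    {Ω Θ 𝒴 : Type*} [MeasurableSpace Ω] [MeasurableSpace Θ] [MeasurableSpace 𝒴]
    [StandardBorelSpace Θ] [Nonempty Θ]
    (P : Measure Ω) [IsProbabilityMeasure P]
    (N : ℕ)
    (θ : Ω → Θ) (hθ : Measurable θ)
    (Y : ℕ → Ω → 𝒴) (hY : ∀ i < N, Measurable (Y i))
    -- `π k` is a regular conditional distribution of `θ` given `(Y 0, …, Y (k-1))`,
    -- i.e. a Markov kernel disintegrating the joint law of the history and `θ`.
    (π : (k : ℕ) → Kernel (Fin k → 𝒴) Θ)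
    (hπMarkov : ∀ k ≤ N, IsMarkovKernel (π k))
    (hπ : ∀ k ≤ N,
      P.map (fun ω => ((fun i : Fin k => Y i ω), θ ω))
        = (P.map (fun ω (i : Fin k) => Y i ω)) ⊗ₘ (π k))
    (A : Set Θ) (hA : MeasurableSet A)
    (k : ℕ) (hk : k < N) :
    P[(fun ω => (π (k + 1) (fun i : Fin (k + 1) => Y i ω) A).toReal) |
        MeasurableSpace.comap (fun ω (i : Fin k) => Y i ω) inferInstance]
      =ᵐ[P] fun ω => (π k (fun i : Fin k => Y i ω) A).toReal := by
  have hhistory : ∀ m ≤ N, Measurable fun ω (i : Fin m) => Y i ω := fun m hm =>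
    measurable_pi_lambda _ fun i => hY i (i.2.trans_le hm)
  have := hπMarkov k hk.le
  have := hπMarkov (k + 1) hk
  exact condExp_posterior_of_comap_le (hhistory k hk.le) (hhistory (k + 1) hk) hθ
    (hπ k hk.le) (hπ (k + 1) hk) hA (comap_history_le_succ Y k)

/-- The Bayesian posterior probabilities form a martingale with respect to the
observation filtration: integrating the next-stage posterior over the next
observation recovers the current posterior. -/
theorem posterior_probability_martingale
    {Ω Θ 𝒴 : Type*} [MeasurableSpace Ω] [MeasurableSpace Θ] [MeasurableSpace 𝒴]
    [StandardBorelSpace Θ] [Nonempty Θ] [StandardBorelSpace 𝒴] [Nonempty 𝒴]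
    (P : Measure Ω) [IsProbabilityMeasure P]
    (N : ℕ) (hN : 0 < N)
    (θ : Ω → Θ) (hθ : Measurable θ)
    (Y : ℕ → Ω → 𝒴) (hY : ∀ i < N, Measurable (Y i))
    -- `π k` is a regular conditional distribution of `θ` given `(Y 0, …, Y (k-1))`,
    -- i.e. a Markov kernel disintegrating the joint law of the history and `θ`.
    (π : (k : ℕ) → Kernel (Fin k → 𝒴) Θ)
    (hπMarkov : ∀ k ≤ N, IsMarkovKernel (π k))
    (hπ : ∀ k ≤ N,
      P.map (fun ω => ((fun i : Fin k => Y i ω), θ ω))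
        = (P.map (fun ω (i : Fin k) => Y i ω)) ⊗ₘ (π k))
    -- `π 0` is the (unconditional) law of `θ`.
    (hπ0 : ∀ h : Fin 0 → 𝒴, π 0 h = P.map θ)
    (A : Set Θ) (hA : MeasurableSet A)
    (k : ℕ) (hk : k < N) :
    P[(fun ω => (π (k + 1) (fun i : Fin (k + 1) => Y i ω) A).toReal) |
        MeasurableSpace.comap (fun ω (i : Fin k) => Y i ω) inferInstance]
      =ᵐ[P] fun ω => (π k (fun i : Fin k => Y i ω) A).toReal :=
  posterior_probability_martingale_general P N θ hθ Y hY π hπMarkov hπ A hA k hk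
end

section
/- Let (Ω, P) be a probability space, Θ and Y standard Borel spaces, N a positive integer, and θ : Ω → Θ, Y_0,…,Y_{N−1} : Ω → Y measurable. Fix 0 ≤ k < N. Let π_k : Y^k → P(Θ) be a regular conditional distribution of θ given (Y_0,…,Y_{k−1}), let L_k : Θ × Y^k → P(Y) be a regular conditional distribution of Y_k given (θ, Y_0,…,Y_{k−1}), and let η_k : Y^k → P(Y) be a regular conditional distribution of Y_k given (Y_0,…,Y_{k−1}). Then for almost every history y = (y_0,…,y_{k−1}) with respect to the law of (Y_0,…,Y_{k−1}), and for every measurable B ⊆ Y: η_k(y)(B) = ∫_Θ L_k(θ′, y)(B) dπ_k(y)(θ′). (Equivalence of the episode-fixed-parameter and posterior-resampled sampling schemes for generating Monte Carlo episodes: resampling the parameter from the current posterior at each stage leaves the predictive law of the next observation, and hence the law of the observation sequence, unchanged.) -/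
open MeasureTheory ProbabilityTheory

/-! Composing the posterior `π` with the likelihood `L` yields a conditional law of `(θ, Y k)`
given the history, so its second marginal `y ↦ ∫ L (θ', y) dπ y` is a conditional law of `Y k`
given the history. Conditional laws with values in a standard Borel space are unique almost
everywhere, hence this mixture agrees with `η` for almost every history. -/

namespace ProbabilityTheory

lemma Kernel.snd_compProd_apply {α β γ : Type*} {mα : MeasurableSpace α}
    {mβ : MeasurableSpace β} {mγ : MeasurableSpace γ}
    (κ : Kernel α β) [IsSFiniteKernel κ] (η : Kernel (α × β) γ) [IsSFiniteKernel η]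
    (a : α) {s : Set γ} (hs : MeasurableSet s) :
    (κ ⊗ₖ η).snd a s = ∫⁻ b, η (a, b) s ∂κ a := by
  rw [Kernel.snd_apply' _ _ hs, Kernel.compProd_apply (measurable_snd hs)]
  rfl

variable {Ω 𝓧 𝓨 𝓩 : Type*} {mΩ : MeasurableSpace Ω}
  {m𝓧 : MeasurableSpace 𝓧} {m𝓨 : MeasurableSpace 𝓨} {m𝓩 : MeasurableSpace 𝓩}
  {P : Measure Ω} {X : Ω → 𝓧} {Y : Ω → 𝓨} {κ : Kernel 𝓧 𝓨}

lemma HasCondDistrib.compProd {Z : Ω → 𝓩} {η : Kernel (𝓧 × 𝓨) 𝓩}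
    (hY : HasCondDistrib Y X κ P) (hZ : HasCondDistrib Z (fun ω ↦ (X ω, Y ω)) η P) :
    HasCondDistrib (fun ω ↦ (Y ω, Z ω)) X (κ ⊗ₖ η) P where
  aemeasurable := hY.aemeasurable_fst.prodMk (hY.aemeasurable_snd.prodMk hZ.aemeasurable_snd)
  map_eq := calc
    P.map (fun ω ↦ (X ω, Y ω, Z ω))
    _ = (P.map (fun ω ↦ ((X ω, Y ω), Z ω))).map MeasurableEquiv.prodAssoc := by
      rw [AEMeasurable.map_map_of_aemeasurable (by fun_prop) hZ.aemeasurable]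
      rfl
    _ = (P.map X ⊗ₘ κ ⊗ₘ η).map MeasurableEquiv.prodAssoc := by
      rw [hZ.map_eq, hY.map_eq]
    _ = P.map X ⊗ₘ (κ ⊗ₖ η) := Measure.compProd_assoc'

lemma HasCondDistrib.ae_eq [MeasurableSpace.CountableOrCountablyGenerated 𝓧 𝓨]
    [IsFiniteMeasure P] {η : Kernel 𝓧 𝓨} [IsFiniteKernel κ] [IsFiniteKernel η]
    (hκ : HasCondDistrib Y X κ P) (hη : HasCondDistrib Y X η P) :
    κ =ᵐ[P.map X] η :=
  Kernel.ae_eq_of_compProd_eq (hκ.map_eq.symm.trans hη.map_eq)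

end ProbabilityTheory

theorem predictive_law_eq_posterior_mixture_of_likelihood_general
    {Ω Θ 𝒴 : Type*} [MeasurableSpace Ω] [MeasurableSpace Θ] [MeasurableSpace 𝒴]
    [StandardBorelSpace 𝒴]
    (P : Measure Ω) [IsProbabilityMeasure P]
    (N : ℕ)
    (θ : Ω → Θ) (hθ : Measurable θ)
    (Y : ℕ → Ω → 𝒴) (hY : ∀ i < N, Measurable (Y i))
    (k : ℕ) (hk : k < N)
    -- `π` is a regular conditional distribution of `θ` given `(Y 0, …, Y (k-1))`.
    (π : Kernel (Fin k → 𝒴) Θ) [IsMarkovKernel π]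
    (hπ : P.map (fun ω => ((fun i : Fin k => Y i ω), θ ω))
        = (P.map (fun ω (i : Fin k) => Y i ω)) ⊗ₘ π)
    -- `L` is a regular conditional distribution of `Y k` given `(θ, Y 0, …, Y (k-1))`.
    (L : Kernel (Θ × (Fin k → 𝒴)) 𝒴) [IsMarkovKernel L]
    (hL : P.map (fun ω => ((θ ω, fun i : Fin k => Y i ω), Y k ω))
        = (P.map (fun ω => (θ ω, fun i : Fin k => Y i ω))) ⊗ₘ L)
    -- `η` is a regular conditional distribution of `Y k` given `(Y 0, …, Y (k-1))`.
    (η : Kernel (Fin k → 𝒴) 𝒴) [IsMarkovKernel η]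
    (hη : P.map (fun ω => ((fun i : Fin k => Y i ω), Y k ω))
        = (P.map (fun ω (i : Fin k) => Y i ω)) ⊗ₘ η) :
    ∀ᵐ y ∂(P.map (fun ω (i : Fin k) => Y i ω)),
      ∀ B : Set 𝒴, MeasurableSet B →
        η y B = ∫⁻ θ', L (θ', y) B ∂(π y) := by
  have hYk : Measurable (Y k) := hY k hk
  have hhist : Measurable (fun ω (i : Fin k) => Y i ω) :=
    measurable_pi_lambda _ fun i ↦ hY i (i.2.trans hk)
  have hπ' : HasCondDistrib θ (fun ω (i : Fin k) ↦ Y i ω) π P :=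
    ⟨(hhist.prodMk hθ).aemeasurable, hπ⟩
  have hL' : HasCondDistrib (Y k) (fun ω ↦ (θ ω, fun i : Fin k ↦ Y i ω)) L P :=
    ⟨((hθ.prodMk hhist).prodMk hYk).aemeasurable, hL⟩
  have hη' : HasCondDistrib (Y k) (fun ω (i : Fin k) ↦ Y i ω) η P :=
    ⟨(hhist.prodMk hYk).aemeasurable, hη⟩
  have hmix := (hπ'.compProd (hL'.measurableEquiv_comp_right MeasurableEquiv.prodComm)).snd
  filter_upwards [hη'.ae_eq hmix] with y hy B hB
  rw [hy, Kernel.snd_compProd_apply _ _ _ hB]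
  rfl

/-- Equivalence of the episode-fixed-parameter and posterior-resampled sampling
schemes: for almost every history, the predictive law of the next observation
is the mixture of the likelihood kernel over the current posterior. -/
theorem predictive_law_eq_posterior_mixture_of_likelihood
    {Ω Θ 𝒴 : Type*} [MeasurableSpace Ω] [MeasurableSpace Θ] [MeasurableSpace 𝒴]
    [StandardBorelSpace Θ] [Nonempty Θ] [StandardBorelSpace 𝒴] [Nonempty 𝒴]
    (P : Measure Ω) [IsProbabilityMeasure P]
    (N : ℕ)
    (θ : Ω → Θ) (hθ : Measurable θ)
    (Y : ℕ → Ω → 𝒴) (hY : ∀ i < N, Measurable (Y i))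
    (k : ℕ) (hk : k < N)
    -- `π` is a regular conditional distribution of `θ` given `(Y 0, …, Y (k-1))`.
    (π : Kernel (Fin k → 𝒴) Θ) [IsMarkovKernel π]
    (hπ : P.map (fun ω => ((fun i : Fin k => Y i ω), θ ω))
        = (P.map (fun ω (i : Fin k) => Y i ω)) ⊗ₘ π)
    -- `L` is a regular conditional distribution of `Y k` given `(θ, Y 0, …, Y (k-1))`.
    (L : Kernel (Θ × (Fin k → 𝒴)) 𝒴) [IsMarkovKernel L]
    (hL : P.map (fun ω => ((θ ω, fun i : Fin k => Y i ω), Y k ω))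
        = (P.map (fun ω => (θ ω, fun i : Fin k => Y i ω))) ⊗ₘ L)
    -- `η` is a regular conditional distribution of `Y k` given `(Y 0, …, Y (k-1))`.
    (η : Kernel (Fin k → 𝒴) 𝒴) [IsMarkovKernel η]
    (hη : P.map (fun ω => ((fun i : Fin k => Y i ω), Y k ω))
        = (P.map (fun ω (i : Fin k) => Y i ω)) ⊗ₘ η) :
    ∀ᵐ y ∂(P.map (fun ω (i : Fin k) => Y i ω)),
      ∀ B : Set 𝒴, MeasurableSet B →
        η y B = ∫⁻ θ', L (θ', y) B ∂(π y) :=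
  predictive_law_eq_posterior_mixture_of_likelihood_general P N θ hθ Y hY k hk π hπ L hL η hη
end

section
/- Let X be a measurable space, E a real Banach space, and N a positive integer. Let P_k : X → P(X) be Markov kernels for k = 0,…,N−1, and let A_k : X → E be bounded strongly measurable functions for k = 0,…,N−1. Suppose G_k : X → E for k = 0,…,N are bounded strongly measurable functions satisfying G_N ≡ 0 and, for all 0 ≤ k < N and all x ∈ X, G_k(x) = A_k(x) + ∫_X G_{k+1}(x′) dP_k(x)(x′). Then for all 0 ≤ k ≤ N and all x ∈ X, G_k(x) = Σ_{l=k}^{N−1} ∫_X A_l(x′) d( (P_{l−1} ∘ ⋯ ∘ P_k)(x) )(x′), where for l = k the empty composition of kernels is interpreted as the Dirac measure δ_x, and P_{l−1} ∘ ⋯ ∘ P_k denotes sequential kernel composition (the law at stage l of the Markov chain started at x at stage k). (The unrolling of the recursive value-gradient relation into the summed policy-gradient expression, the key structural step in the proof of the policy gradient theorem.) -/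
open MeasureTheory ProbabilityTheory

/-! The right-hand side, the reward-to-go `V_k`, satisfies the same backward recursion
`V_k = A_k + ∫ V_{k+1} dP_k` as `G` with the same terminal value `V_N = 0`, so `G_k = V_k` by
downward induction on `k`. The recursion for `V` comes from splitting off the first transition,
`P_{l-1} ∘ ⋯ ∘ P_k = (P_{l-1} ∘ ⋯ ∘ P_{k+1}) ∘ P_k`, and Fubini for kernel composition.
-/

/-- The law at stage `k + j` of the Markov chain with transition kernels `P`
started at `x` at stage `k`: `chainLaw P k 0 x = δ_x` and
`chainLaw P k (j+1) x = (chainLaw P k j x).bind (P (k+j))`, i.e. the sequential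
composition `P_{k+j-1} ∘ ⋯ ∘ P_k` applied to `x` (the Dirac measure for the
empty composition). -/
noncomputable def chainLaw {X : Type*} [MeasurableSpace X]
    (P : ℕ → Kernel X X) (k : ℕ) : (j : ℕ) → X → Measure X
  | 0, x => Measure.dirac x
  | j + 1, x => (chainLaw P k j x).bind fun x' => P (k + j) x'

section

variable {X E : Type*} [MeasurableSpace X] [NormedAddCommGroup E]

noncomputable def chainKernel (P : ℕ → Kernel X X) (k : ℕ) : ℕ → Kernel X X
  | 0 => Kernel.id
  | j + 1 => P (k + j) ∘ₖ chainKernel P k j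

lemma chainKernel_apply (P : ℕ → Kernel X X) (k j : ℕ) (x : X) :
    chainKernel P k j x = chainLaw P k j x := by
  induction j generalizing x with
  | zero => exact Kernel.id_apply x
  | succ j ih => rw [chainKernel, Kernel.comp_apply, chainLaw, funext ih]

lemma chainKernel_succ_eq_comp (P : ℕ → Kernel X X) (k j : ℕ) :
    chainKernel P k (j + 1) = chainKernel P (k + 1) j ∘ₖ P k := by
  induction j with
  | zero => simp [chainKernel]
  | succ j ih =>
    rw [chainKernel, ih, chainKernel, ← Kernel.comp_assoc, Nat.add_right_comm, Nat.add_assoc]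

lemma isFiniteKernel_chainKernel (P : ℕ → Kernel X X) (k j : ℕ)
    (hP : ∀ i < j, IsFiniteKernel (P (k + i))) : IsFiniteKernel (chainKernel P k j) := by
  induction j with
  | zero => exact inferInstanceAs (IsFiniteKernel Kernel.id)
  | succ j ih =>
    have := ih fun i hi => hP i (by omega)
    have := hP j j.lt_succ_self
    exact inferInstanceAs (IsFiniteKernel (P (k + j) ∘ₖ chainKernel P k j))

lemma integrable_chainLaw_of_bounded (P : ℕ → Kernel X X) (k j : ℕ)
    (hP : ∀ i < j, IsFiniteKernel (P (k + i))) {f : X → E} (hf : StronglyMeasurable f)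
    {C : ℝ} (hC : ∀ x, ‖f x‖ ≤ C) (x : X) : Integrable f (chainLaw P k j x) := by
  have := isFiniteKernel_chainKernel P k j hP
  rw [← chainKernel_apply]
  exact .of_bound hf.aestronglyMeasurable C (ae_of_all _ hC)

variable [NormedSpace ℝ E]

lemma integrable_integral_chainLaw (P : ℕ → Kernel X X) (k j : ℕ) {f : X → E} {x : X}
    (hf : Integrable f (chainLaw P k (j + 1) x)) :
    Integrable (fun y ↦ ∫ z, f z ∂chainLaw P (k + 1) j y) (P k x) := by
  rw [← chainKernel_apply, chainKernel_succ_eq_comp] at hf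
  simpa only [chainKernel_apply] using hf.integral_comp

lemma integral_chainLaw_succ (P : ℕ → Kernel X X) (k j : ℕ) {f : X → E} {x : X}
    (hf : Integrable f (chainLaw P k (j + 1) x)) :
    ∫ z, f z ∂chainLaw P k (j + 1) x =
      ∫ y, ∫ z, f z ∂chainLaw P (k + 1) j y ∂P k x := by
  rw [← chainKernel_apply, chainKernel_succ_eq_comp] at hf ⊢
  simpa only [chainKernel_apply] using Kernel.integral_comp hf

noncomputable def rewardToGo (P : ℕ → Kernel X X) (A : ℕ → X → E) (N k : ℕ) (x : X) :
    E :=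
  ∑ l ∈ Finset.Ico k N, ∫ x', A l x' ∂chainLaw P k (l - k) x

lemma rewardToGo_self (P : ℕ → Kernel X X) (A : ℕ → X → E) (N : ℕ) (x : X) :
    rewardToGo P A N N x = 0 := by
  simp [rewardToGo]

lemma rewardToGo_eq_add_integral [CompleteSpace E] (P : ℕ → Kernel X X) (A : ℕ → X → E)
    {N k : ℕ} (hk : k < N) (hP : ∀ l < N, IsFiniteKernel (P l))
    (hA : ∀ l < N, StronglyMeasurable (A l)) (hABdd : ∀ l < N, ∃ C, ∀ x, ‖A l x‖ ≤ C)
    (x : X) :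
    rewardToGo P A N k x = A k x + ∫ y, rewardToGo P A N (k + 1) y ∂P k x := by
  have hint : ∀ l ∈ Finset.Ico (k + 1) N,
      Integrable (A l) (chainLaw P k (l - (k + 1) + 1) x) := by
    intro l hl
    obtain ⟨hkl, hlN⟩ := Finset.mem_Ico.1 hl
    obtain ⟨C, hC⟩ := hABdd l hlN
    exact integrable_chainLaw_of_bounded P k _ (fun i _ ↦ hP _ (by omega)) (hA l hlN) hC x
  have hsplit : ∀ l ∈ Finset.Ico (k + 1) N, l - k = l - (k + 1) + 1 := fun l hl ↦ by
    have := (Finset.mem_Ico.1 hl).1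
    omega
  unfold rewardToGo
  rw [Finset.sum_eq_sum_Ico_succ_bot hk, Nat.sub_self, Finset.sum_congr rfl
    fun l hl ↦ by rw [hsplit l hl, integral_chainLaw_succ P k _ (hint l hl)],
    integral_finsetSum _ fun l hl ↦ integrable_integral_chainLaw P k _ (hint l hl)]
  exact congrArg (· + _) (integral_dirac' _ x (hA k hk))

end

theorem value_recursion_unrolled_general
    {X E : Type*} [MeasurableSpace X]
    [NormedAddCommGroup E] [NormedSpace ℝ E] [CompleteSpace E]
    (N : ℕ)
    (P : ℕ → Kernel X X) (hP : ∀ k < N, IsMarkovKernel (P k))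
    (A : ℕ → X → E)
    (hA : ∀ k < N, StronglyMeasurable (A k))
    (hABdd : ∀ k < N, ∃ C, ∀ x, ‖A k x‖ ≤ C)
    (G : ℕ → X → E)
    (hGN : ∀ x, G N x = 0)
    (hGrec : ∀ k < N, ∀ x, G k x = A k x + ∫ x', G (k + 1) x' ∂(P k x)) :
    ∀ k ≤ N, ∀ x, G k x
      = ∑ l ∈ Finset.Ico k N, ∫ x', A l x' ∂(chainLaw P k (l - k) x) := by
  have hPfin : ∀ l < N, IsFiniteKernel (P l) := fun l hl ↦ have := hP l hl; inferInstance
  intro k hk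
  induction hk using Nat.decreasingInduction with
  | self => exact fun x ↦ (hGN x).trans (rewardToGo_self P A N x).symm
  | of_succ k hk ih =>
    intro x
    rw [hGrec k hk x, funext ih]
    exact (rewardToGo_eq_add_integral P A hk hPfin hA hABdd x).symm

/-- Unrolling of the recursive value relation into a summed expression: if
`G_N ≡ 0` and `G_k = A_k + ∫ G_{k+1} dP_k`, then
`G_k(x) = Σ_{l=k}^{N-1} ∫ A_l d((P_{l-1} ∘ ⋯ ∘ P_k)(x))`. -/
theorem value_recursion_unrolled
    {X E : Type*} [MeasurableSpace X]
    [NormedAddCommGroup E] [NormedSpace ℝ E] [CompleteSpace E]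
    (N : ℕ) (hN : 0 < N)
    (P : ℕ → Kernel X X) (hP : ∀ k < N, IsMarkovKernel (P k))
    (A : ℕ → X → E)
    (hA : ∀ k < N, StronglyMeasurable (A k))
    (hABdd : ∀ k < N, ∃ C, ∀ x, ‖A k x‖ ≤ C)
    (G : ℕ → X → E)
    (hG : ∀ k ≤ N, StronglyMeasurable (G k))
    (hGBdd : ∀ k ≤ N, ∃ C, ∀ x, ‖G k x‖ ≤ C)
    (hGN : ∀ x, G N x = 0)
    (hGrec : ∀ k < N, ∀ x, G k x = A k x + ∫ x', G (k + 1) x' ∂(P k x)) :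
    ∀ k ≤ N, ∀ x, G k x
      = ∑ l ∈ Finset.Ico k N, ∫ x', A l x' ∂(chainLaw P k (l - k) x) :=
  value_recursion_unrolled_general N P hP A hA hABdd G hGN hGrec
end
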